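/- In a finite topological space X, the collection of backward open balls B⁻(x,n) = {y ∈ X : Ψ(y,x) < n}, for x ∈ X and n ≥ 1, forms a basis generating the opposite topology of X, whose open sets are precisely the closed sets of X. -/

import Mathlib

open Set Topology

/-- The minimal open set containing `x`: the intersection of all open sets containing `x`. -/
def minOpen (X : Type*) [TopologicalSpace X] (x : X) : Set X :=
  ⋂₀ {U : Set X | IsOpen U ∧ x ∈ U}

/-- A nested sequence of open sets around `x`: a sequence of open sets starting at the
minimal open set of `x`, increasing, strictly increasing until it reaches the whole space
(after which it is stationary), with no open set strictly between consecutive terms. -/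
def NestedSeq (X : Type*) [TopologicalSpace X] (x : X) (c : ℕ → Set X) : Prop :=
  c 0 = minOpen X x ∧ (∀ j, IsOpen (c j)) ∧
  (∀ j, c j ⊆ c (j + 1)) ∧
  (∀ j, c j ≠ c (j + 1) ∨ c j = Set.univ) ∧
  (∀ j, ∀ V : Set X, IsOpen V → c j ⊆ V → V ⊆ c (j + 1) → V = c j ∨ V = c (j + 1))

/-- The furtherness `Ψ(x,y)`: the least `k` such that `y` belongs to the `k`-th term of
some nested sequence of open sets around `x`. -/
noncomputable def furth (X : Type*) [TopologicalSpace X] (x y : X) : ℕ :=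
  sInf {k | ∃ c : ℕ → Set X, NestedSeq X x c ∧ y ∈ c k}

section Aux

variable {X : Type*} [TopologicalSpace X] [Finite X]

attribute [local instance] Classical.propDecidable
set_option linter.unusedSectionVars false
set_option linter.unusedVariables false

lemma isOpen_minOpen (x : X) : IsOpen (minOpen X x) :=
  Set.Finite.isOpen_sInter (Set.toFinite _) (fun _ hU => hU.1)

lemma mem_minOpen (x : X) : x ∈ minOpen X x :=
  Set.mem_sInter.mpr fun _ hU => hU.2

lemma minOpen_subset {x : X} {U : Set X} (hU : IsOpen U) (hx : x ∈ U) :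
    minOpen X x ⊆ U := Set.sInter_subset_of_mem ⟨hU, hx⟩

lemma exists_cover {U : Set X} (hU : IsOpen U) (hne : U ≠ univ) :
    ∃ V, IsOpen V ∧ U ⊂ V ∧ ∀ W, IsOpen W → U ⊆ W → W ⊆ V → W = U ∨ W = V := by
  have hS : ({V : Set X | IsOpen V ∧ U ⊂ V}).Finite := Set.toFinite _
  have hne' : ({V : Set X | IsOpen V ∧ U ⊂ V}).Nonempty :=
    ⟨univ, isOpen_univ, ssubset_of_subset_of_ne (subset_univ U) hne⟩
  obtain ⟨V, hV, hmin⟩ := hS.exists_minimal hne'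
  refine ⟨V, hV.1, hV.2, fun W hWo hUW hWV => ?_⟩
  by_cases hWU : W = U
  · exact Or.inl hWU
  · have hW : W ∈ {V : Set X | IsOpen V ∧ U ⊂ V} :=
      ⟨hWo, ssubset_of_subset_of_ne hUW (Ne.symm hWU)⟩
    exact Or.inr (subset_antisymm hWV (hmin hW hWV))

/-- A choice of an immediate successor (cover) of an open set. -/
noncomputable def coverSet (X : Type*) [TopologicalSpace X] (U : Set X) : Set X :=
  if h : ∃ V, IsOpen V ∧ U ⊂ V ∧ ∀ W, IsOpen W → U ⊆ W → W ⊆ V → W = U ∨ W = V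
  then h.choose else univ

lemma coverSet_spec {U : Set X} (hU : IsOpen U) (hne : U ≠ univ) :
    IsOpen (coverSet X U) ∧ U ⊂ coverSet X U ∧
      ∀ W, IsOpen W → U ⊆ W → W ⊆ coverSet X U → W = U ∨ W = coverSet X U := by
  have h := exists_cover hU hne
  rw [coverSet, dif_pos h]
  exact h.choose_spec

/-- Key extension lemma: any "weak nested sequence" `d` whose start is contained in an
open set `M` can be dominated by a genuine nested-type sequence starting at `M`. -/
lemma nested_extend {M : Set X} (hM : IsOpen M) (d : ℕ → Set X)
    (hd0 : d 0 ⊆ M) (hdo : ∀ j, IsOpen (d j)) (hdm : ∀ j, d j ⊆ d (j + 1))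
    (hdb : ∀ j, ∀ V : Set X, IsOpen V → d j ⊆ V → V ⊆ d (j + 1) → V = d j ∨ V = d (j + 1)) :
    ∃ e : ℕ → Set X, e 0 = M ∧ (∀ j, IsOpen (e j)) ∧ (∀ j, e j ⊆ e (j + 1)) ∧
      (∀ j, e j ≠ e (j + 1) ∨ e j = univ) ∧
      (∀ j, ∀ V : Set X, IsOpen V → e j ⊆ V → V ⊆ e (j + 1) → V = e j ∨ V = e (j + 1)) ∧
      (∀ j, d j ⊆ e j) := by
  set step : ℕ → Set X → Set X := fun j E =>
    if d (j + 1) ⊆ E then (if E = univ then univ else coverSet X E) else E ∪ d (j + 1) with hstep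
  set e : ℕ → Set X := fun j => Nat.rec M step j with he
  have he0 : e 0 = M := rfl
  have hesucc : ∀ j, e (j + 1) = step j (e j) := fun j => rfl
  -- invariant: open and dominates d
  have hinv : ∀ j, IsOpen (e j) ∧ d j ⊆ e j := by
    intro j
    induction j with
    | zero => exact ⟨hM, hd0⟩
    | succ j ih =>
      rw [hesucc, hstep]
      by_cases h1 : d (j + 1) ⊆ e j
      · simp only [if_pos h1]
        by_cases h2 : e j = univ
        · simp only [if_pos h2]
          exact ⟨isOpen_univ, subset_univ _⟩
        · simp only [if_neg h2]
          obtain ⟨ho, hss, _⟩ := coverSet_spec ih.1 h2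
          exact ⟨ho, h1.trans hss.subset⟩
      · simp only [if_neg h1]
        exact ⟨ih.1.union (hdo (j + 1)), subset_union_right⟩
  refine ⟨e, he0, fun j => (hinv j).1, ?_, ?_, ?_, fun j => (hinv j).2⟩
  · -- monotone
    intro j
    rw [hesucc, hstep]
    by_cases h1 : d (j + 1) ⊆ e j
    · simp only [if_pos h1]
      by_cases h2 : e j = univ
      · simp only [if_pos h2]; exact h2.le
      · simp only [if_neg h2]
        exact (coverSet_spec (hinv j).1 h2).2.1.subset
    · simp only [if_neg h1]; exact subset_union_left
  · -- strictness
    intro j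
    rw [hesucc, hstep]
    by_cases h1 : d (j + 1) ⊆ e j
    · simp only [if_pos h1]
      by_cases h2 : e j = univ
      · exact Or.inr h2
      · simp only [if_neg h2]
        exact Or.inl (fun h => h2 (by
          have := (coverSet_spec (hinv j).1 h2).2.1
          exact absurd h this.ne))
    · simp only [if_neg h1]
      refine Or.inl (fun h => h1 ?_)
      rw [h]; exact subset_union_right
  · -- no open set strictly between
    intro j V hV hVl hVr
    rw [hesucc, hstep] at hVr ⊢
    by_cases h1 : d (j + 1) ⊆ e j
    · simp only [if_pos h1] at hVr ⊢
      by_cases h2 : e j = univ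
      · simp only [if_pos h2] at hVr ⊢
        exact Or.inr (subset_antisymm hVr (by rw [← h2] at hVr ⊢; exact hVl))
      · simp only [if_neg h2] at hVr ⊢
        exact (coverSet_spec (hinv j).1 h2).2.2 V hV hVl hVr
    · simp only [if_neg h1] at hVr ⊢
      have hdjV : d j ⊆ V := ((hinv j).2).trans hVl
      have hW : V ∩ d (j + 1) = d j ∨ V ∩ d (j + 1) = d (j + 1) := by
        refine hdb j _ (hV.inter (hdo (j + 1))) ?_ inter_subset_right
        exact subset_inter hdjV (hdm j)
      rcases hW with hW | hW
      · left
        apply subset_antisymm _ hVl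
        intro v hv
        rcases hVr hv with h | h
        · exact h
        · have : v ∈ d j := hW ▸ (mem_inter hv h)
          exact (hinv j).2 this
      · right
        apply subset_antisymm hVr
        apply union_subset hVl
        intro v hv
        have : v ∈ V ∩ d (j + 1) := hW.symm ▸ hv
        exact this.1

lemma nestedSeq_exists (y : X) : ∃ c, NestedSeq X y c := by
  obtain ⟨e, h0, ho, hm, hs, hb, _⟩ :=
    nested_extend (isOpen_minOpen y) (fun _ => minOpen X y) (le_refl _)
      (fun _ => isOpen_minOpen y) (fun _ => le_refl _)
      (fun j V _ h1 h2 => Or.inl (subset_antisymm h2 h1))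
  exact ⟨e, h0, ho, hm, hs, hb⟩

lemma nestedSeq_reaches_univ {y : X} {c : ℕ → Set X} (hc : NestedSeq X y c) :
    ∃ k, c k = univ := by
  by_contra h
  push_neg at h
  have hsm : StrictMono c := by
    apply strictMono_nat_of_lt_succ
    intro k
    exact lt_of_le_of_ne (hc.2.2.1 k) ((hc.2.2.2.1 k).resolve_right (h k))
  exact not_injective_infinite_finite c hsm.injective

lemma furthSet_nonempty (y x : X) :
    {k | ∃ c : ℕ → Set X, NestedSeq X y c ∧ x ∈ c k}.Nonempty := by
  obtain ⟨c, hc⟩ := nestedSeq_exists y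
  obtain ⟨k, hk⟩ := nestedSeq_reaches_univ hc
  exact ⟨k, c, hc, hk ▸ mem_univ x⟩

lemma furth_mono {x y z : X} (hz : z ∈ minOpen X y) : furth X y x ≤ furth X z x := by
  obtain ⟨c, hc, hx⟩ := Nat.sInf_mem (furthSet_nonempty z x)
  obtain ⟨h0, ho, hm, hsb, hb⟩ := hc
  obtain ⟨e, he0, heo, hem, hes, heb, hde⟩ :=
    nested_extend (isOpen_minOpen y) c
      (h0 ▸ minOpen_subset (isOpen_minOpen y) hz) ho hm hb
  exact Nat.sInf_le ⟨e, ⟨he0, heo, hem, hes, heb⟩, hde _ hx⟩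

lemma furth_eq_zero_iff {x y : X} : furth X y x = 0 ↔ x ∈ minOpen X y := by
  constructor
  · intro h
    have := Nat.sInf_mem (furthSet_nonempty y x)
    rw [furth] at h
    rw [h] at this
    obtain ⟨c, hc, hx⟩ := this
    exact hc.1 ▸ hx
  · intro h
    obtain ⟨c, hc⟩ := nestedSeq_exists y
    exact Nat.le_zero.mp (Nat.sInf_le ⟨c, hc, hc.1.symm ▸ h⟩)

lemma isOpen_of_minOpen {S : Set X} (h : ∀ y ∈ S, minOpen X y ⊆ S) : IsOpen S := by
  have : S = ⋃ y ∈ S, minOpen X y := by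
    apply subset_antisymm
    · intro y hy; exact mem_biUnion hy (mem_minOpen y)
    · exact iUnion₂_subset h
  rw [this]
  exact isOpen_biUnion fun y _ => isOpen_minOpen y

lemma isClosed_ball (x : X) (n : ℕ) : IsClosed {y : X | furth X y x < n} := by
  rw [← isOpen_compl_iff]
  apply isOpen_of_minOpen
  intro y hy z hz
  simp only [mem_compl_iff, mem_setOf_eq, not_lt] at hy ⊢
  exact hy.trans (furth_mono hz)

end Aux

theorem stmt13 (X : Type*) [TopologicalSpace X] [Finite X] (s : Set X) :
    IsOpen[TopologicalSpace.generateFrom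
        {B : Set X | ∃ x : X, ∃ n : ℕ, 1 ≤ n ∧ B = {y : X | furth X y x < n}}] s
      ↔ IsClosed s := by
  constructor
  · intro h
    induction h with
    | basic B hB =>
      obtain ⟨x, n, _, rfl⟩ := hB
      exact isClosed_ball x n
    | univ => exact isClosed_univ
    | inter U V _ _ hU hV => exact hU.inter hV
    | sUnion S _ hS =>
      rw [Set.sUnion_eq_biUnion]
      exact Set.Finite.isClosed_biUnion (Set.toFinite S) hS
  · intro hs
    have hrep : s = ⋃₀ {B : Set X | ∃ x ∈ s, B = {y : X | furth X y x < 1}} := by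
      ext y
      constructor
      · intro hy
        refine ⟨{y' : X | furth X y' y < 1}, ⟨y, hy, rfl⟩, ?_⟩
        simp only [mem_setOf_eq]
        rw [Nat.lt_one_iff, furth_eq_zero_iff]
        exact mem_minOpen y
      · rintro ⟨B, ⟨x, hx, rfl⟩, hyB⟩
        simp only [mem_setOf_eq, Nat.lt_one_iff, furth_eq_zero_iff] at hyB
        have hyc : y ∈ closure {x} := by
          rw [mem_closure_iff]
          intro o ho hyo
          exact ⟨x, minOpen_subset ho hyo hyB, rfl⟩
        exact closure_minimal (singleton_subset_iff.mpr hx) hs hyc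
    rw [hrep]
    apply TopologicalSpace.GenerateOpen.sUnion
    rintro B ⟨x, _, rfl⟩
    exact TopologicalSpace.GenerateOpen.basic _ ⟨x, 1, le_refl 1, rfl⟩
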